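/- arXiv:1308.2259 — 3 statements merged into one kernel-verified Lean document; each statement's English description precedes it below -/
import Mathlib

section
/- Let q > 2 and α ∈ (0, α*(q)). Then I_q(α) = (2/(q-2))·I_{2q/(q-2)}(α^{2/(q-2)}), where on the right-hand side the exponent 2q/(q-2) plays the role of q and α^{2/(q-2)} the role of α. (The substitution t = (u²α)^{-1/(q-2)} transforms one integral into the other, and α ∈ (0, α*(q)) if and only if α^{2/(q-2)} ∈ (0, α*(2q/(q-2))).) -/
open Set Filter MeasureTheory

noncomputable def fQ (q α t : ℝ) : ℝ := t ^ 2 - 1 - α * t ^ q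

noncomputable def alphaStar (q : ℝ) : ℝ := 2 / (q - 2) * ((q - 2) / q) ^ (q / 2)

noncomputable def x0 (q α : ℝ) : ℝ := sInf {t : ℝ | 0 < t ∧ fQ q α t = 0}

noncomputable def x1 (q α : ℝ) : ℝ := sSup {t : ℝ | 0 < t ∧ fQ q α t = 0}

noncomputable def Iq (q α : ℝ) : ℝ := ∫ t in x0 q α..x1 q α, 1 / Real.sqrt (fQ q α t)

noncomputable def fQd1 (q α t : ℝ) : ℝ := 2 * t - α * q * t ^ (q - 1)

noncomputable def fQd2 (q α t : ℝ) : ℝ := 2 - α * q * (q - 1) * t ^ (q - 2)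

noncomputable def fQd3 (q α t : ℝ) : ℝ := -(α * q * (q - 1) * (q - 2) * t ^ (q - 3))

noncomputable def psiQ (q α t : ℝ) : ℝ := fQd1 q α t ^ 2 - 2 * fQ q α t * fQd2 q α t

/-! The substitution `t = (α u²)^(-1/(q-2))` is a decreasing bijection of `(0, ∞)` with
`α t^(q-2) u² = 1`. Writing `q' = 2q/(q-2)` and `β = α^(2/(q-2))`, it satisfies
`f_{q,α}(t) = (t/u)² f_{q',β}(u)` and `|dt/du| = (2/(q-2)) t/u`. Hence it maps the positive roots
of `f_{q',β}` onto those of `f_{q,α}`, reversing their order, and turns `dt / √f_{q,α}(t)` into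
`(2/(q-2)) du / √f_{q',β}(u)`. The one-dimensional change of variables formula holds without any
integrability assumption, so the identity holds for the Bochner integrals as they stand.
Finally `α*(q') = α*(q)^(2/(q-2))`, and `β ↦ β^(2/(q-2))` is increasing. -/

open Real

def rootSet (q α : ℝ) : Set ℝ := {t | 0 < t ∧ fQ q α t = 0}

lemma two_lt_two_mul_div_sub_two {q : ℝ} (hq : 2 < q) : 2 < 2 * q / (q - 2) := by
  rw [lt_div_iff₀ (by linarith)]
  linarith

lemma StrictAntiOn.Ioo_csInf_csSup_image {f : ℝ → ℝ} {a c : ℝ} {S : Set ℝ}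
    (hf : StrictAntiOn f (Ioi a)) (hfc : ContinuousOn f (Ioi a)) (hS : BddAbove S) (hac : a < c)
    (hSc : S ⊆ Ici c) :
    Ioo (sInf (f '' S)) (sSup (f '' S)) = f '' Ioo (sInf S) (sSup S) := by
  rcases S.eq_empty_or_nonempty with rfl | hne
  · simp only [image_empty, Real.sInf_empty, Real.sSup_empty, Ioo_self]
  have hbdd : BddBelow S := ⟨c, hSc⟩
  have hle : sInf S ≤ sSup S := csInf_le_csSup hne hbdd hS
  have hIcc : Icc (sInf S) (sSup S) ⊆ Ioi a := fun x hx =>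
    hac.trans_le ((le_csInf hne hSc).trans hx.1)
  have hfcS : ∀ x ∈ Icc (sInf S) (sSup S), ContinuousWithinAt f S x := fun x hx =>
    (hfc.continuousAt (Ioi_mem_nhds (hIcc hx))).continuousWithinAt
  have hfS : AntitoneOn f S := hf.antitoneOn.mono fun x hx => hac.trans_le (hSc hx)
  rw [← hfS.map_csSup_of_continuousWithinAt (hfcS _ ⟨hle, le_rfl⟩) hne hS,
    ← hfS.map_csInf_of_continuousWithinAt (hfcS _ ⟨le_rfl, hle⟩) hne hbdd]
  exact ((hfc.mono hIcc).image_Ioo_of_strictAntiOn hle (hf.mono hIcc)).symm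

section RootSet

variable {q α : ℝ}

lemma one_lt_of_mem_rootSet (hα : 0 < α) {t : ℝ} (ht : t ∈ rootSet q α) : 1 < t := by
  obtain ⟨ht0, hft⟩ := ht
  have : 0 < α * t ^ q := by positivity
  rw [fQ] at hft
  nlinarith

lemma bddAbove_rootSet (hq : 2 < q) (hα : 0 < α) : BddAbove (rootSet q α) := by
  refine ⟨α⁻¹ ^ (q - 2)⁻¹, fun t ⟨ht, hft⟩ => ?_⟩
  have hsplit : t ^ q = t ^ (q - 2) * t ^ 2 := by
    rw [← rpow_add_natCast ht.ne']; norm_num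
  have hlt : α * t ^ (q - 2) < 1 := by
    have : 0 < t ^ 2 := by positivity
    rw [fQ, hsplit] at hft
    nlinarith
  rw [le_rpow_inv_iff_of_pos ht.le (by positivity) (by linarith), inv_eq_one_div,
    le_div_iff₀' hα]
  exact hlt.le

lemma bddBelow_rootSet : BddBelow (rootSet q α) := ⟨0, fun _ ht => ht.1.le⟩

lemma x0_nonneg : 0 ≤ x0 q α := Real.sInf_nonneg fun _ ht => ht.1.le

lemma x0_le_x1 (hq : 2 < q) (hα : 0 < α) : x0 q α ≤ x1 q α := by
  change sInf (rootSet q α) ≤ sSup (rootSet q α)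
  rcases (rootSet q α).eq_empty_or_nonempty with h | h
  · rw [h, Real.sInf_empty, Real.sSup_empty]
  · exact csInf_le_csSup h bddBelow_rootSet (bddAbove_rootSet hq hα)

lemma Iq_eq_setIntegral (hq : 2 < q) (hα : 0 < α) :
    Iq q α = ∫ t in Ioo (x0 q α) (x1 q α), 1 / √(fQ q α t) := by
  rw [Iq, intervalIntegral.integral_of_le (x0_le_x1 hq hα), integral_Ioc_eq_integral_Ioo]

end RootSet

noncomputable def substMap (q α u : ℝ) : ℝ := (α * u ^ 2) ^ (-(q - 2)⁻¹)

section Substitution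

variable {q α : ℝ}

lemma substMap_pos (hα : 0 < α) {u : ℝ} (hu : 0 < u) : 0 < substMap q α u :=
  rpow_pos_of_pos (by positivity) _

lemma substMap_rpow (hq : q ≠ 2) (hα : 0 < α) (u : ℝ) :
    substMap q α u ^ (q - 2) = (α * u ^ 2)⁻¹ := by
  rw [substMap, ← rpow_mul (by positivity), neg_mul, inv_mul_cancel₀ (sub_ne_zero.mpr hq),
    rpow_neg_one]

lemma fQ_substMap (hq : 2 < q) (hα : 0 < α) {u : ℝ} (hu : 0 < u) :
    fQ q α (substMap q α u) =
      (substMap q α u / u) ^ 2 * fQ (2 * q / (q - 2)) (α ^ (2 / (q - 2))) u := by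
  have hq2 : q - 2 ≠ 0 := by linarith
  set t := substMap q α u with ht_def
  have ht : 0 < t := substMap_pos hα hu
  have hw : 0 < α * u ^ 2 := by positivity
  have hαt : α * t ^ q = t ^ 2 / u ^ 2 := by
    rw [show q = (q - 2) + (2 : ℕ) by push_cast; ring, rpow_add_natCast ht.ne',
      ht_def, substMap_rpow hq.ne' hα]
    field_simp
  have hβu : α ^ (2 / (q - 2)) * u ^ (2 * q / (q - 2)) = u ^ 2 / t ^ 2 := by
    have ht2 : t ^ 2 = (α * u ^ 2) ^ (-(2 / (q - 2))) := by
      rw [ht_def, substMap, ← rpow_natCast, ← rpow_mul hw.le]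
      congr 1; push_cast; ring
    rw [ht2, rpow_neg hw.le, div_inv_eq_mul, mul_rpow hα.le (by positivity),
      ← rpow_natCast u 2, ← rpow_mul hu.le,
      show 2 * q / (q - 2) = ((2 : ℕ) : ℝ) + 2 * (2 / (q - 2)) by push_cast; field_simp; ring,
      rpow_add hu]
    push_cast
    ring
  rw [fQ, fQ, hαt, hβu]
  field_simp
  ring

lemma surjOn_substMap (hq : q ≠ 2) (hα : 0 < α) : SurjOn (substMap q α) (Ioi 0) (Ioi 0) := by
  intro t (ht : 0 < t)
  have hq2 : q - 2 ≠ 0 := sub_ne_zero.mpr hq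
  have hαt : 0 < α * t ^ (q - 2) := by positivity
  refine ⟨(√(α * t ^ (q - 2)))⁻¹, inv_pos.mpr (sqrt_pos.mpr hαt), ?_⟩
  rw [substMap, inv_pow, sq_sqrt hαt.le, mul_inv, ← mul_assoc, mul_inv_cancel₀ hα.ne',
    one_mul, ← rpow_neg ht.le, ← rpow_mul ht.le, neg_mul_neg, mul_inv_cancel₀ hq2, rpow_one]

lemma strictAntiOn_substMap (hq : 2 < q) (hα : 0 < α) : StrictAntiOn (substMap q α) (Ioi 0) := by
  intro a (ha : 0 < a) b _ hab
  have hexp : -(q - 2)⁻¹ < 0 := neg_neg_of_pos (inv_pos.mpr (by linarith))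
  exact rpow_lt_rpow_of_neg (by positivity) (by gcongr) hexp

lemma continuousOn_substMap (hα : 0 < α) : ContinuousOn (substMap q α) (Ioi 0) :=
  (continuousOn_const.mul (continuousOn_pow 2)).rpow_const fun _ hu =>
    Or.inl (mul_pos hα (pow_pos hu 2)).ne'

lemma hasDerivAt_substMap (hα : 0 < α) {u : ℝ} (hu : 0 < u) :
    HasDerivAt (substMap q α) (-(2 / (q - 2)) * (substMap q α u / u)) u := by
  have hw : α * u ^ 2 ≠ 0 := by positivity
  refine (((hasDerivAt_pow 2 u).const_mul α).rpow_const (p := -(q - 2)⁻¹)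
    (Or.inl hw)).congr_deriv ?_
  rw [rpow_sub_one hw, substMap]
  field_simp
  ring

lemma setIntegral_image_substMap (hq : 2 < q) (hα : 0 < α) {s : Set ℝ} (hs : MeasurableSet s)
    (hs0 : s ⊆ Ioi 0) :
    ∫ t in substMap q α '' s, 1 / √(fQ q α t) =
      2 / (q - 2) * ∫ u in s, 1 / √(fQ (2 * q / (q - 2)) (α ^ (2 / (q - 2))) u) := by
  rw [integral_image_eq_integral_abs_deriv_smul hs
      (fun u hu => (hasDerivAt_substMap hα (hs0 hu)).hasDerivWithinAt)
      ((strictAntiOn_substMap hq hα).injOn.mono hs0), ← integral_const_mul]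
  refine setIntegral_congr_fun hs fun u hu => ?_
  have hu0 : 0 < u := hs0 hu
  have hk : 0 < substMap q α u / u := div_pos (substMap_pos hα hu0) hu0
  have hc : 0 < 2 / (q - 2) := div_pos two_pos (by linarith)
  rw [smul_eq_mul, fQ_substMap hq hα hu0, sqrt_mul (sq_nonneg _), sqrt_sq hk.le, neg_mul,
    abs_neg, abs_of_pos (mul_pos hc hk), one_div, one_div, mul_inv, mul_assoc,
    mul_inv_cancel_left₀ hk.ne']

lemma rootSet_eq_image (hq : 2 < q) (hα : 0 < α) :
    rootSet q α = substMap q α '' rootSet (2 * q / (q - 2)) (α ^ (2 / (q - 2))) := by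
  ext t
  constructor
  · rintro ⟨ht, hft⟩
    obtain ⟨u, hu, rfl⟩ := surjOn_substMap hq.ne' hα ht
    refine ⟨u, ⟨hu, ?_⟩, rfl⟩
    rw [fQ_substMap hq hα hu] at hft
    exact (mul_eq_zero.mp hft).resolve_left (pow_ne_zero 2 (div_pos (substMap_pos hα hu) hu).ne')
  · rintro ⟨u, ⟨hu, hfu⟩, rfl⟩
    exact ⟨substMap_pos hα hu, by rw [fQ_substMap hq hα hu, hfu, mul_zero]⟩

lemma Ioo_x0_x1_eq_image (hq : 2 < q) (hα : 0 < α) :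
    Ioo (x0 q α) (x1 q α) = substMap q α '' Ioo (x0 (2 * q / (q - 2)) (α ^ (2 / (q - 2))))
      (x1 (2 * q / (q - 2)) (α ^ (2 / (q - 2)))) := by
  have hβ : 0 < α ^ (2 / (q - 2)) := rpow_pos_of_pos hα _
  change Ioo (sInf (rootSet q α)) (sSup (rootSet q α)) = _
  rw [rootSet_eq_image hq hα]
  exact (strictAntiOn_substMap hq hα).Ioo_csInf_csSup_image (continuousOn_substMap hα)
    (bddAbove_rootSet (two_lt_two_mul_div_sub_two hq) hβ) zero_lt_one
    fun v hv => (one_lt_of_mem_rootSet hβ hv).le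

end Substitution

section AlphaStar

variable {q : ℝ}

lemma alphaStar_pos (hq : 2 < q) : 0 < alphaStar q :=
  mul_pos (div_pos two_pos (by linarith)) (rpow_pos_of_pos (div_pos (by linarith) (by linarith)) _)

lemma alphaStar_two_mul_div_sub_two (hq : 2 < q) :
    alphaStar (2 * q / (q - 2)) = alphaStar q ^ (2 / (q - 2)) := by
  have hq2 : q - 2 ≠ 0 := by linarith
  set s := (q - 2) / 2 with hs
  have hs0 : 0 < s := by rw [hs]; linarith
  have hleft : (2 / (q - 2)) ^ (2 / (q - 2)) = s ^ (-(2 / (q - 2))) := by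
    rw [rpow_neg hs0.le, ← inv_rpow hs0.le, hs, inv_div]
  have hright : ((q - 2) / q) ^ (q / 2 * (2 / (q - 2))) =
      s ^ (q / (q - 2)) * (2 / q) ^ (q / (q - 2)) := by
    rw [← mul_rpow hs0.le (by positivity), hs]
    congr 1 <;> field_simp
  have hcoeff : 2 / (2 * q / (q - 2) - 2) = s := by rw [hs]; field_simp; ring
  have hbase : (2 * q / (q - 2) - 2) / (2 * q / (q - 2)) = 2 / q := by field_simp; ring
  rw [alphaStar, alphaStar, hcoeff, hbase, show 2 * q / (q - 2) / 2 = q / (q - 2) by ring,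
    mul_rpow (by positivity) (by positivity), ← rpow_mul (by positivity), hleft, hright,
    ← mul_assoc, ← rpow_add hs0, show -(2 / (q - 2)) + q / (q - 2) = 1 by field_simp; ring,
    rpow_one]

lemma rpow_mem_Ioo_alphaStar_iff (hq : 2 < q) {β : ℝ} (hβ : 0 < β) :
    β ∈ Ioo 0 (alphaStar q) ↔ β ^ (2 / (q - 2)) ∈ Ioo 0 (alphaStar (2 * q / (q - 2))) := by
  rw [alphaStar_two_mul_div_sub_two hq, mem_Ioo, mem_Ioo,
    rpow_lt_rpow_iff hβ.le (alphaStar_pos hq).le (div_pos two_pos (by linarith))]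
  exact ⟨fun h => ⟨rpow_pos_of_pos hβ _, h.2⟩, fun h => ⟨hβ, h.2⟩⟩

end AlphaStar

/-- identity I_q(α) = (2/(q-2))·I_{2q/(q-2)}(α^{2/(q-2)}), together with the
fact that α ∈ (0, α*(q)) iff α^{2/(q-2)} ∈ (0, α*(2q/(q-2))). -/
theorem stmt_6 (q α : ℝ) (hq : 2 < q) (hα : α ∈ Ioo (0 : ℝ) (alphaStar q)) :
    Iq q α = 2 / (q - 2) * Iq (2 * q / (q - 2)) (α ^ (2 / (q - 2))) ∧
    α ^ (2 / (q - 2)) ∈ Ioo (0 : ℝ) (alphaStar (2 * q / (q - 2))) ∧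
    (∀ β : ℝ, 0 < β →
      (β ∈ Ioo (0 : ℝ) (alphaStar q) ↔
        β ^ (2 / (q - 2)) ∈ Ioo (0 : ℝ) (alphaStar (2 * q / (q - 2))))) := by
  have hα0 : 0 < α := hα.1
  have hβ0 : 0 < α ^ (2 / (q - 2)) := rpow_pos_of_pos hα0 _
  refine ⟨?_, (rpow_mem_Ioo_alphaStar_iff hq hα0).mp hα,
    fun β hβ => rpow_mem_Ioo_alphaStar_iff hq hβ⟩
  rw [Iq_eq_setIntegral hq hα0, Iq_eq_setIntegral (two_lt_two_mul_div_sub_two hq) hβ0,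
    Ioo_x0_x1_eq_image hq hα0,
    setIntegral_image_substMap hq hα0 measurableSet_Ioo fun u hu => x0_nonneg.trans_lt hu.1]
end

section
/- Let q > 2, α ∈ (0, α*(q)), and set ψ(t) = f'(t)² - 2 f(t) f''(t) where f(t) = t² - 1 - α t^q. Then ψ(x₀(α)) = f'(x₀(α))² > 0, ψ'(t) = -2 f(t) f'''(t) > 0 for all t ∈ (x₀(α), x₁(α)), and consequently ψ(t) > 0 for all t ∈ [x₀(α), x₁(α)]. -/
open Set Filter MeasureTheory

/-! ### Auxiliary definitions and lemmas -/

noncomputable def gA (q t : ℝ) : ℝ := t ^ (2 - q) - t ^ (-q)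

noncomputable def tmA (q : ℝ) : ℝ := Real.sqrt (q / (q - 2))

lemma tm_sq {q : ℝ} (hq : 2 < q) : tmA q ^ 2 = q / (q - 2) :=
  Real.sq_sqrt (div_nonneg (by linarith) (by linarith))

lemma one_lt_tm {q : ℝ} (hq : 2 < q) : 1 < tmA q := by
  rw [show (1:ℝ) = Real.sqrt 1 by simp, tmA]
  apply Real.sqrt_lt_sqrt (by norm_num)
  rw [lt_div_iff₀ (by linarith)]; linarith

lemma tm_pos {q : ℝ} (hq : 2 < q) : 0 < tmA q := lt_trans one_pos (one_lt_tm hq)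

lemma fg {q α t : ℝ} (ht : 0 < t) : fQ q α t = t ^ q * (gA q t - α) := by
  unfold fQ gA
  have h1 : t ^ q * t ^ (2 - q) = t ^ 2 := by
    rw [← Real.rpow_add ht, show q + (2 - q) = (2:ℝ) by ring, Real.rpow_two]
  have h2 : t ^ q * t ^ (-q) = 1 := by
    rw [← Real.rpow_add ht]; simp
  rw [show t ^ q * (t ^ (2-q) - t ^ (-q) - α)
      = t ^ q * t ^ (2-q) - t ^ q * t ^ (-q) - α * t ^ q from by ring, h1, h2]

lemma hasDerivAt_gA {q : ℝ} {t : ℝ} (ht : 0 < t) :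
    HasDerivAt (gA q) (t ^ (-q - 1) * (q - (q - 2) * t ^ 2)) t := by
  have h1 : HasDerivAt (fun s : ℝ => s ^ (2 - q)) ((2 - q) * t ^ (2 - q - 1)) t :=
    Real.hasDerivAt_rpow_const (Or.inl ht.ne')
  have h2 : HasDerivAt (fun s : ℝ => s ^ (-q)) ((-q) * t ^ (-q - 1)) t :=
    Real.hasDerivAt_rpow_const (Or.inl ht.ne')
  refine (h1.sub h2).congr_deriv ?_
  have e1 : t ^ (2 - q - 1) = t ^ 2 * t ^ (-q - 1) := by
    rw [show (2 - q - 1 : ℝ) = 2 + (-q - 1) by ring, Real.rpow_add ht, Real.rpow_two]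
  rw [e1]; ring

lemma gA_mono {q : ℝ} (hq : 2 < q) : StrictMonoOn (gA q) (Ioc 0 (tmA q)) := by
  apply strictMonoOn_of_deriv_pos (convex_Ioc _ _)
  · exact fun t ht => (hasDerivAt_gA ht.1).continuousAt.continuousWithinAt
  · intro t ht
    rw [interior_Ioc] at ht
    rw [(hasDerivAt_gA ht.1).deriv]
    have h' : t < Real.sqrt (q / (q - 2)) := ht.2
    have h1 : t ^ 2 < q / (q - 2) := (Real.lt_sqrt ht.1.le).mp h'
    have h2 : t ^ 2 * (q - 2) < q := (lt_div_iff₀ (by linarith)).mp h1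
    exact mul_pos (Real.rpow_pos_of_pos ht.1 _) (by nlinarith)

lemma gA_anti {q : ℝ} (hq : 2 < q) : StrictAntiOn (gA q) (Ici (tmA q)) := by
  apply strictAntiOn_of_deriv_neg (convex_Ici _)
  · intro t ht
    exact (hasDerivAt_gA (lt_of_lt_of_le (tm_pos hq) ht)).continuousAt.continuousWithinAt
  · intro t ht
    rw [interior_Ici] at ht
    have ht0 : 0 < t := lt_trans (tm_pos hq) ht
    rw [(hasDerivAt_gA ht0).deriv]
    have h' : Real.sqrt (q / (q - 2)) < t := ht
    have h1 : q / (q - 2) < t ^ 2 := (Real.sqrt_lt' ht0).mp h'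
    have h2 : q < t ^ 2 * (q - 2) := (div_lt_iff₀ (by linarith)).mp h1
    exact mul_neg_of_pos_of_neg (Real.rpow_pos_of_pos ht0 _) (by nlinarith)

lemma gA_tm {q : ℝ} (hq : 2 < q) : gA q (tmA q) = alphaStar q := by
  have htm : 0 < tmA q := tm_pos hq
  have hc : (0:ℝ) ≤ q / (q - 2) := div_nonneg (by linarith) (by linarith)
  have h1 : tmA q ^ (2 - q) = tmA q ^ (2:ℝ) * tmA q ^ (-q) := by
    rw [show (2:ℝ) - q = 2 + -q by ring, Real.rpow_add htm]
  have h2 : tmA q ^ (-q) = ((q - 2) / q) ^ (q / 2) := by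
    rw [tmA, Real.sqrt_eq_rpow, ← Real.rpow_mul hc,
      show (1/2) * (-q) = -(q/2) by ring, Real.rpow_neg hc, ← Real.inv_rpow hc, inv_div]
  unfold gA alphaStar
  rw [h1, Real.rpow_two, tm_sq hq, h2]
  have hne : q - 2 ≠ 0 := by linarith
  field_simp
  ring

lemma hasDerivAt_fQ {q α t : ℝ} (ht : 0 < t) : HasDerivAt (fQ q α) (fQd1 q α t) t := by
  have h1 : HasDerivAt (fun s : ℝ => s ^ 2) (2 * t) t := by
    simpa using hasDerivAt_pow 2 t
  have h2 : HasDerivAt (fun s : ℝ => s ^ q) (q * t ^ (q - 1)) t :=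
    Real.hasDerivAt_rpow_const (Or.inl ht.ne')
  exact ((h1.sub_const 1).sub (h2.const_mul α)).congr_deriv (by unfold fQd1; ring)

lemma hasDerivAt_fQd1 {q α t : ℝ} (ht : 0 < t) : HasDerivAt (fQd1 q α) (fQd2 q α t) t := by
  have h1 : HasDerivAt (fun s : ℝ => 2 * s) 2 t := by
    simpa using (hasDerivAt_id t).const_mul (2:ℝ)
  have h2 : HasDerivAt (fun s : ℝ => s ^ (q - 1)) ((q - 1) * t ^ (q - 1 - 1)) t :=
    Real.hasDerivAt_rpow_const (Or.inl ht.ne')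
  refine (h1.sub (h2.const_mul (α * q))).congr_deriv ?_
  rw [show q - 1 - 1 = q - 2 by ring]; unfold fQd2; ring

lemma hasDerivAt_fQd2 {q α t : ℝ} (ht : 0 < t) : HasDerivAt (fQd2 q α) (fQd3 q α t) t := by
  have h2 : HasDerivAt (fun s : ℝ => s ^ (q - 2)) ((q - 2) * t ^ (q - 2 - 1)) t :=
    Real.hasDerivAt_rpow_const (Or.inl ht.ne')
  refine ((hasDerivAt_const t (2:ℝ)).sub (h2.const_mul (α * q * (q - 1)))).congr_deriv ?_
  rw [show q - 2 - 1 = q - 3 by ring]; unfold fQd3; ring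

lemma hasDerivAt_psiQ {q α t : ℝ} (ht : 0 < t) :
    HasDerivAt (psiQ q α) (-2 * fQ q α t * fQd3 q α t) t := by
  have h := ((hasDerivAt_fQd1 (q:=q) (α:=α) ht).pow 2).sub
    (((hasDerivAt_fQ (q:=q) (α:=α) ht).const_mul 2).mul (hasDerivAt_fQd2 (q:=q) (α:=α) ht))
  refine h.congr_deriv ?_
  push_cast
  ring

/-- ψ(x₀) = f'(x₀)² > 0, ψ' = -2ff''' > 0 on (x₀, x₁), hence ψ > 0 on [x₀, x₁]. -/
theorem stmt_8 (q α : ℝ) (hq : 2 < q) (hα : α ∈ Ioo (0 : ℝ) (alphaStar q)) :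
    psiQ q α (x0 q α) = fQd1 q α (x0 q α) ^ 2 ∧ 0 < psiQ q α (x0 q α) ∧
    (∀ t ∈ Ioo (x0 q α) (x1 q α),
      HasDerivAt (psiQ q α) (-2 * fQ q α t * fQd3 q α t) t ∧
      0 < -2 * fQ q α t * fQd3 q α t) ∧
    (∀ t ∈ Icc (x0 q α) (x1 q α), 0 < psiQ q α t) := by
  obtain ⟨hα0, hα1⟩ := hα
  have hq0 : (0:ℝ) < q := by linarith
  have htm1 : 1 < tmA q := one_lt_tm hq
  have htm0 : 0 < tmA q := tm_pos hq
  have hf1 : fQ q α 1 = -α := by simp [fQ]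
  have hftm : 0 < fQ q α (tmA q) := by
    rw [fg htm0, gA_tm hq]
    exact mul_pos (Real.rpow_pos_of_pos htm0 _) (by linarith)
  have contf1 : ContinuousOn (fQ q α) (Icc 1 (tmA q)) := fun s hs =>
    (hasDerivAt_fQ (lt_of_lt_of_le one_pos hs.1)).continuousAt.continuousWithinAt
  obtain ⟨a, haI, hfa⟩ := intermediate_value_Ioo htm1.le contf1
    (show (0:ℝ) ∈ Ioo (fQ q α 1) (fQ q α (tmA q)) from by rw [hf1]; exact ⟨by linarith, hftm⟩)
  have ha1 : 1 < a := haI.1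
  have hatm : a < tmA q := haI.2
  have ha0 : 0 < a := lt_trans one_pos ha1
  -- the second root
  have hg0 : Tendsto (gA q) atTop (nhds 0) := by
    have h1 := tendsto_rpow_neg_atTop (show (0:ℝ) < q - 2 by linarith)
    have h2 := tendsto_rpow_neg_atTop hq0
    have h3 := h1.sub h2
    rw [sub_zero] at h3
    have he : gA q = fun x : ℝ => x ^ (-(q - 2)) - x ^ (-q) := by
      funext x; rw [gA, show -(q - 2) = 2 - q by ring]
    rw [he]; exact h3
  obtain ⟨T, hTg, hTtm⟩ :=
    ((hg0.eventually_lt_const hα0).and (eventually_ge_atTop (tmA q + 1))).exists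
  have hT0 : 0 < T := by linarith
  have hfT : fQ q α T < 0 := by
    rw [fg hT0]
    exact mul_neg_of_pos_of_neg (Real.rpow_pos_of_pos hT0 _) (by linarith)
  have contf2 : ContinuousOn (fQ q α) (Icc (tmA q) T) := fun s hs =>
    (hasDerivAt_fQ (lt_of_lt_of_le htm0 hs.1)).continuousAt.continuousWithinAt
  obtain ⟨b, hbI, hfb⟩ := intermediate_value_Ioo' (by linarith : tmA q ≤ T) contf2
    (show (0:ℝ) ∈ Ioo (fQ q α T) (fQ q α (tmA q)) from ⟨hfT, hftm⟩)
  have htmb : tmA q < b := hbI.1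
  have hb0 : 0 < b := lt_trans htm0 htmb
  have hab : a < b := lt_trans hatm htmb
  -- extracting g-values at roots
  have groot : ∀ t : ℝ, 0 < t → fQ q α t = 0 → gA q t = α := by
    intro t ht0 hft
    rw [fg ht0] at hft
    rcases mul_eq_zero.mp hft with h | h
    · exact absurd h (Real.rpow_pos_of_pos ht0 q).ne'
    · have := sub_eq_zero.mp h; exact this
  have hga : gA q a = α := groot a ha0 hfa
  have hgb : gA q b = α := groot b hb0 hfb
  -- x0 = a and x1 = b
  have hSle : IsLeast {t : ℝ | 0 < t ∧ fQ q α t = 0} a := by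
    refine ⟨⟨ha0, hfa⟩, ?_⟩
    rintro t ⟨ht0, hft⟩
    by_contra hcon
    push_neg at hcon
    have hgt : gA q t = α := groot t ht0 hft
    have := gA_mono hq ⟨ht0, (hcon.trans hatm).le⟩ ⟨ha0, hatm.le⟩ hcon
    rw [hgt, hga] at this
    exact lt_irrefl _ this
  have hSge : IsGreatest {t : ℝ | 0 < t ∧ fQ q α t = 0} b := by
    refine ⟨⟨hb0, hfb⟩, ?_⟩
    rintro t ⟨ht0, hft⟩
    by_contra hcon
    push_neg at hcon
    have hgt : gA q t = α := groot t ht0 hft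
    have := gA_anti hq htmb.le (htmb.trans hcon).le hcon
    rw [hgt, hgb] at this
    exact lt_irrefl _ this
  have hx0 : x0 q α = a := hSle.csInf_eq
  have hx1 : x1 q α = b := hSge.csSup_eq
  -- f positive between the roots
  have fpos : ∀ t ∈ Ioo a b, 0 < fQ q α t := by
    rintro t ⟨h1, h2⟩
    have ht0 : 0 < t := lt_trans ha0 h1
    rw [fg ht0]
    refine mul_pos (Real.rpow_pos_of_pos ht0 _) ?_
    rcases le_or_gt t (tmA q) with h | h
    · have := gA_mono hq ⟨ha0, hatm.le⟩ ⟨ht0, h⟩ h1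
      rw [hga] at this; linarith
    · have := gA_anti hq h.le htmb.le h2
      rw [hgb] at this; linarith
  -- f'(a) > 0
  have hαa : α * a ^ q = a ^ 2 - 1 := by
    have h := hfa; unfold fQ at h; linarith
  have haq : a ^ q = a ^ (q - 1) * a := by
    rw [← Real.rpow_add_one ha0.ne' (q - 1)]; congr 1; ring
  have hatm' : a < Real.sqrt (q / (q - 2)) := hatm
  have ha2 : a ^ 2 < q / (q - 2) := (Real.lt_sqrt ha0.le).mp hatm'
  have h3 : a ^ 2 * (q - 2) < q := (lt_div_iff₀ (by linarith)).mp ha2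
  have hd1a : 0 < fQd1 q α a := by
    unfold fQd1
    rw [haq] at hαa
    nlinarith [hαa, h3, ha0, ha1]
  -- positivity of ψ'
  have psipos : ∀ t ∈ Ioo a b, 0 < -2 * fQ q α t * fQd3 q α t := by
    intro t ht
    have ht0 : 0 < t := lt_trans ha0 ht.1
    have hcoef : 0 < α * q * (q - 1) * (q - 2) * t ^ (q - 3) :=
      mul_pos (mul_pos (mul_pos (mul_pos hα0 hq0) (by linarith)) (by linarith))
        (Real.rpow_pos_of_pos ht0 _)
    have hp := mul_pos (mul_pos two_pos (fpos t ht)) hcoef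
    have e : -2 * fQ q α t * fQd3 q α t
        = 2 * fQ q α t * (α * q * (q - 1) * (q - 2) * t ^ (q - 3)) := by
      unfold fQd3; ring
    rw [e]; exact hp
  have hmono : StrictMonoOn (psiQ q α) (Icc a b) := by
    apply strictMonoOn_of_deriv_pos (convex_Icc a b)
    · intro t htI
      exact (hasDerivAt_psiQ (lt_of_lt_of_le ha0 htI.1)).continuousAt.continuousWithinAt
    · intro t htI
      rw [interior_Icc] at htI
      rw [(hasDerivAt_psiQ (lt_trans ha0 htI.1)).deriv]
      exact psipos t htI
  have hpsia : psiQ q α a = fQd1 q α a ^ 2 := by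
    unfold psiQ; rw [hfa]; ring
  refine ⟨?_, ?_, ?_, ?_⟩
  · rw [hx0]; exact hpsia
  · rw [hx0, hpsia]; exact pow_pos hd1a 2
  · rw [hx0, hx1]
    intro t ht
    exact ⟨hasDerivAt_psiQ (lt_trans ha0 ht.1), psipos t ht⟩
  · rw [hx0, hx1]
    intro t ht
    rcases eq_or_lt_of_le ht.1 with h | h
    · rw [← h, hpsia]; exact pow_pos hd1a 2
    · have h0 : 0 < psiQ q α a := by rw [hpsia]; exact pow_pos hd1a 2
      have := hmono (left_mem_Icc.mpr hab.le) ht h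
      linarith
end

section
/- Let q > 2. Then I_q(α) → +∞ as α → 0 from the right. -/
/-!
In the variable `s = t ^ 2` the function `fQ q α` becomes `s - 1 - α s ^ (q / 2)`, which is concave.
Between the two roots, concavity bounds `fQ` from below by a multiple of the distance to the nearer
root, so `1 / √(fQ q α)` is integrable on `[x0, x1]`. If `α M ^ q < 1` with `M ≥ 2`, then `fQ` is
positive on `[2, M]`, so `x0 < 2 < M < x1`, and `fQ t ≤ t ^ 2` gives
`Iq q α ≥ ∫ t in 2..M, 1 / t = log (M / 2)`.
-/

open Set Filter MeasureTheory

open Real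

theorem intervalIntegrable_sub_rpow {r : ℝ} (hr : -1 < r) (a b : ℝ) :
    IntervalIntegrable (fun t => (t - a) ^ r) volume a b := by
  simpa using (intervalIntegral.intervalIntegrable_rpow' (a := 0) (b := b - a) hr).comp_sub_right a

theorem intervalIntegrable_rsub_rpow {r : ℝ} (hr : -1 < r) (a b : ℝ) :
    IntervalIntegrable (fun t => (b - t) ^ r) volume a b := by
  simpa using (intervalIntegral.intervalIntegrable_rpow' (a := b - a) (b := 0) hr).comp_sub_left b

theorem intervalIntegrable_one_div_sqrt_of_mul_min_le {g : ℝ → ℝ} {a b c : ℝ} (hab : a ≤ b)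
    (hc : 0 < c) (hg : Measurable g) (hlow : ∀ t ∈ Ioo a b, c * min (t - a) (b - t) ≤ g t) :
    IntervalIntegrable (fun t => 1 / √(g t)) volume a b := by
  have hdom : IntervalIntegrable
      (fun t => c ^ (-(1 / 2) : ℝ) * ((t - a) ^ (-(1 / 2) : ℝ) + (b - t) ^ (-(1 / 2) : ℝ)))
      volume a b :=
    ((intervalIntegrable_sub_rpow (by norm_num) a b).add
      (intervalIntegrable_rsub_rpow (by norm_num) a b)).const_mul _
  refine hdom.mono_fun (measurable_const.div hg.sqrt).aestronglyMeasurable ?_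
  rw [uIoc_of_le hab, ← Measure.restrict_congr_set Ioo_ae_eq_Ioc]
  refine ae_restrict_of_forall_mem measurableSet_Ioo fun t ht => ?_
  have hta : 0 < t - a := sub_pos.2 ht.1
  have hbt : 0 < b - t := sub_pos.2 ht.2
  have hmin : 0 < min (t - a) (b - t) := lt_min hta hbt
  dsimp only
  rw [norm_of_nonneg (by positivity), norm_of_nonneg (by positivity)]
  calc 1 / √(g t) ≤ 1 / √(c * min (t - a) (b - t)) :=
        one_div_le_one_div_of_le (sqrt_pos.2 (by positivity)) (sqrt_le_sqrt (hlow t ht))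
    _ = c ^ (-(1 / 2) : ℝ) * min (t - a) (b - t) ^ (-(1 / 2) : ℝ) := by
        rw [sqrt_eq_rpow, one_div, ← rpow_neg (by positivity), mul_rpow hc.le hmin.le]
    _ ≤ _ := by
        gcongr
        rcases min_choice (t - a) (b - t) with h | h <;> rw [h]
        · exact le_add_of_nonneg_right (rpow_nonneg hbt.le _)
        · exact le_add_of_nonneg_left (rpow_nonneg hta.le _)

theorem ConcaveOn.mul_min_le {g : ℝ → ℝ} {a b m s : ℝ} (hg : ConcaveOn ℝ (Icc a b) g)
    (ha : 0 ≤ g a) (hb : 0 ≤ g b) (hm : m ∈ Ioo a b) (hgm : 0 ≤ g m) (hs : s ∈ Ioo a b) :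
    g m * min (s - a) (b - s) ≤ (b - a) * g s := by
  have hmIcc : m ∈ Icc a b := Ioo_subset_Icc_self hm
  rcases lt_or_ge s m with hsm | hms
  · have key := hg.neg.secant_mono_aux1 (left_mem_Icc.2 (hm.1.trans hm.2).le) hmIcc hs.1 hsm
    simp only [Pi.neg_apply] at key
    have hgs : 0 ≤ g s := by nlinarith [hm.1, hs.1]
    calc g m * min (s - a) (b - s) ≤ g m * (s - a) := by gcongr; exact min_le_left _ _
      _ ≤ (m - a) * g s := by nlinarith
      _ ≤ (b - a) * g s := by gcongr; exact hm.2.le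
  · rcases hms.eq_or_lt with rfl | hms
    · nlinarith [min_le_left (m - a) (b - m), hm.1, hm.2]
    have key := hg.neg.secant_mono_aux1 hmIcc (right_mem_Icc.2 (hm.1.trans hm.2).le) hms hs.2
    simp only [Pi.neg_apply] at key
    have hgs : 0 ≤ g s := by nlinarith [hm.2, hs.2]
    calc g m * min (s - a) (b - s) ≤ g m * (b - s) := by gcongr; exact min_le_right _ _
      _ ≤ (b - m) * g s := by nlinarith
      _ ≤ (b - a) * g s := by gcongr; exact hm.1.le

/-- `x0 q α` and `x1 q α` are by definition the infimum and supremum of this set. -/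
def rootsQ (q α : ℝ) : Set ℝ := {t : ℝ | 0 < t ∧ fQ q α t = 0}

noncomputable def fQSq (q α s : ℝ) : ℝ := s - 1 - α * s ^ (q / 2)

section

variable {q α : ℝ}

theorem fQ_eq_fQSq {t : ℝ} (ht : 0 ≤ t) : fQ q α t = fQSq q α (t ^ 2) := by
  rw [fQ, fQSq, ← rpow_natCast, ← rpow_mul ht, Nat.cast_ofNat, mul_div_cancel₀ q two_ne_zero]

theorem concaveOn_fQSq (hq : 2 ≤ q) (hα : 0 ≤ α) : ConcaveOn ℝ (Ici 0) (fQSq q α) :=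
  ((concaveOn_id (convex_Ici 0)).add_const (-1)).sub
    ((convexOn_rpow (p := q / 2) (by linarith)).smul hα) |>.congr fun s _ => by
      simp [fQSq, sub_eq_add_neg]

theorem continuous_fQ (hq : 0 ≤ q) : Continuous (fQ q α) := by
  unfold fQ
  fun_prop

theorem fQ_le_sq (hα : 0 ≤ α) {t : ℝ} (ht : 0 ≤ t) : fQ q α t ≤ t ^ 2 := by
  have := rpow_nonneg ht q
  rw [fQ]; nlinarith

theorem fQ_neg_of_le_one (hα : 0 < α) {t : ℝ} (ht : 0 < t) (ht1 : t ≤ 1) : fQ q α t < 0 := by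
  have := rpow_pos_of_pos ht q
  rw [fQ]; nlinarith

theorem fQ_pos_of_mem_Icc (hα : 0 ≤ α) (hq : 0 ≤ q) {t M : ℝ} (ht : t ∈ Icc 2 M)
    (hαM : α * M ^ q < 1) : 0 < fQ q α t := by
  obtain ⟨h2t, htM⟩ := ht
  have : α * t ^ q ≤ α * M ^ q := by gcongr
  rw [fQ]; nlinarith

theorem eventually_fQ_neg (hq : 2 < q) (hα : 0 < α) : ∀ᶠ t in atTop, fQ q α t < 0 := by
  filter_upwards [eventually_gt_atTop 0,
    (tendsto_rpow_atTop (sub_pos.2 hq)).eventually_ge_atTop (1 / α)] with t ht hpow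
  have hsplit : t ^ q = t ^ (q - 2) * t ^ 2 := by
    rw [← rpow_natCast, ← rpow_add ht]; norm_num
  have : 1 ≤ α * t ^ (q - 2) := by rwa [div_le_iff₀' hα] at hpow
  rw [fQ, hsplit]; nlinarith [pow_pos ht 2]

theorem rootsQ_subset_Ioi_one (hα : 0 < α) : rootsQ q α ⊆ Ioi 1 := fun _ ⟨ht, hft⟩ =>
  lt_of_not_ge fun ht1 => (fQ_neg_of_le_one hα ht ht1).ne hft

theorem isClosed_rootsQ (hq : 0 ≤ q) (hα : 0 < α) : IsClosed (rootsQ q α) := by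
  have : rootsQ q α = fQ q α ⁻¹' {0} ∩ Ici 1 := by
    ext t
    exact ⟨fun ht => ⟨ht.2, Ioi_subset_Ici_self (rootsQ_subset_Ioi_one hα ht)⟩,
      fun ht => ⟨zero_lt_one.trans_le ht.2, ht.1⟩⟩
  rw [this]
  exact (isClosed_singleton.preimage (continuous_fQ hq)).inter isClosed_Ici

theorem mem_rootsQ_of_fQ_pos (hq : 2 < q) (hα : 0 < α) {t : ℝ} (ht : 0 < t)
    (hft : 0 < fQ q α t) :
    x0 q α ∈ rootsQ q α ∧ x1 q α ∈ rootsQ q α ∧ x0 q α < t ∧ t < x1 q α := by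
  have hcont : Continuous (fQ q α) := continuous_fQ (by linarith)
  obtain ⟨B, hB⟩ := (eventually_fQ_neg hq hα).exists_forall_of_atTop
  obtain ⟨b, htb, hfb⟩ := ((eventually_gt_atTop t).and (eventually_fQ_neg hq hα)).exists
  have ht1 : 1 < t := lt_of_not_ge fun h => (fQ_neg_of_le_one hα ht h).not_gt hft
  obtain ⟨r₀, hr₀, hfr₀⟩ := intermediate_value_Ioo ht1.le hcont.continuousOn
    ⟨fQ_neg_of_le_one hα one_pos le_rfl, hft⟩
  obtain ⟨r₁, hr₁, hfr₁⟩ := intermediate_value_Ioo' htb.le hcont.continuousOn ⟨hfb, hft⟩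
  have hr₀S : r₀ ∈ rootsQ q α := ⟨one_pos.trans hr₀.1, hfr₀⟩
  have hr₁S : r₁ ∈ rootsQ q α := ⟨ht.trans hr₁.1, hfr₁⟩
  have hclosed : IsClosed (rootsQ q α) := isClosed_rootsQ (by linarith) hα
  have hbddBelow : BddBelow (rootsQ q α) := ⟨0, fun s hs => hs.1.le⟩
  have hbddAbove : BddAbove (rootsQ q α) :=
    ⟨B, fun s hs => le_of_not_gt fun h => (hB s h.le).ne hs.2⟩
  have hx0 : sInf (rootsQ q α) ∈ rootsQ q α := hclosed.csInf_mem ⟨r₀, hr₀S⟩ hbddBelow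
  have hx1 : sSup (rootsQ q α) ∈ rootsQ q α := hclosed.csSup_mem ⟨r₀, hr₀S⟩ hbddAbove
  exact ⟨hx0, hx1, (csInf_le hbddBelow hr₀S).trans_lt hr₀.2,
    hr₁.1.trans_le (le_csSup hbddAbove hr₁S)⟩

theorem fQ_mul_min_le (hq : 2 < q) (hα : 0 < α) {M t : ℝ} (hM : 0 < M) (hfM : 0 < fQ q α M)
    (ht : t ∈ Ioo (x0 q α) (x1 q α)) :
    fQ q α M * min (t - x0 q α) (x1 q α - t) ≤ (x1 q α ^ 2 - x0 q α ^ 2) * fQ q α t := by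
  obtain ⟨ha, hb, haM, hMb⟩ := mem_rootsQ_of_fQ_pos hq hα hM hfM
  set a := x0 q α
  set b := x1 q α
  have ha1 : 1 < a := rootsQ_subset_Ioi_one hα ha
  have ht0 : 0 < t := by linarith [ht.1]
  have hconc : ConcaveOn ℝ (Icc (a ^ 2) (b ^ 2)) (fQSq q α) :=
    (concaveOn_fQSq hq.le hα.le).subset (fun s hs => (sq_nonneg a).trans hs.1) (convex_Icc _ _)
  have hsq {u v : ℝ} (hu : 0 < u) (huv : u < v) : u ^ 2 < v ^ 2 := by gcongr
  have key := hconc.mul_min_le (m := M ^ 2) (s := t ^ 2)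
    (by rw [← fQ_eq_fQSq (by linarith), ha.2]) (by rw [← fQ_eq_fQSq (by linarith), hb.2])
    ⟨hsq (by linarith) haM, hsq hM hMb⟩ (by rw [← fQ_eq_fQSq hM.le]; exact hfM.le)
    ⟨hsq (by linarith) ht.1, hsq ht0 ht.2⟩
  rw [← fQ_eq_fQSq hM.le, ← fQ_eq_fQSq ht0.le] at key
  refine le_trans (mul_le_mul_of_nonneg_left (min_le_min ?_ ?_) hfM.le) key <;>
    nlinarith [ht.1, ht.2]

theorem intervalIntegrable_one_div_sqrt_fQ (hq : 2 < q) (hα : 0 < α) {M : ℝ} (hM : 0 < M)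
    (hfM : 0 < fQ q α M) :
    IntervalIntegrable (fun t => 1 / √(fQ q α t)) volume (x0 q α) (x1 q α) := by
  obtain ⟨ha, -, haM, hMb⟩ := mem_rootsQ_of_fQ_pos hq hα hM hfM
  have hba : 0 < x1 q α ^ 2 - x0 q α ^ 2 := by nlinarith [ha.1]
  refine intervalIntegrable_one_div_sqrt_of_mul_min_le (haM.trans hMb).le
    (div_pos hfM hba) (continuous_fQ (by linarith)).measurable fun t ht => ?_
  rw [div_mul_eq_mul_div, div_le_iff₀' hba]
  exact fQ_mul_min_le hq hα hM hfM ht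

theorem log_le_Iq (hq : 2 < q) (hα : 0 < α) {M : ℝ} (hM : 2 ≤ M) (hαM : α * M ^ q < 1) :
    log (M / 2) ≤ Iq q α := by
  have hpos : ∀ t ∈ Icc 2 M, 0 < fQ q α t := fun t ht =>
    fQ_pos_of_mem_Icc hα.le (by linarith) ht hαM
  have hfM := hpos M ⟨hM, le_rfl⟩
  obtain ⟨-, -, hx0, -⟩ := mem_rootsQ_of_fQ_pos hq hα two_pos (hpos 2 ⟨le_rfl, hM⟩)
  obtain ⟨-, -, -, hx1⟩ := mem_rootsQ_of_fQ_pos hq hα (by linarith) hfM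
  have hint := intervalIntegrable_one_div_sqrt_fQ hq hα (by linarith) hfM
  have hsub : uIcc 2 M ⊆ uIcc (x0 q α) (x1 q α) := by
    rw [uIcc_of_le hM, uIcc_of_le (hx0.trans_le hM |>.trans hx1).le]
    exact Icc_subset_Icc hx0.le hx1.le
  have hzero : (0 : ℝ) ∉ uIcc 2 M := notMem_uIcc_of_lt two_pos (by linarith)
  calc log (M / 2) = ∫ t in (2 : ℝ)..M, 1 / t := (integral_one_div hzero).symm
    _ ≤ ∫ t in (2 : ℝ)..M, 1 / √(fQ q α t) := by
      refine intervalIntegral.integral_mono_on hM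
        (intervalIntegral.intervalIntegrable_one_div (fun t ht h => hzero (h ▸ ht))
          continuousOn_id) (hint.mono_set hsub) fun t ht => ?_
      have ht0 : 0 ≤ t := by linarith [ht.1]
      exact one_div_le_one_div_of_le (sqrt_pos.2 (hpos t ht))
        ((sqrt_le_sqrt (fQ_le_sq hα.le ht0)).trans_eq (sqrt_sq ht0))
    _ ≤ Iq q α := intervalIntegral.integral_mono_interval hx0.le hM hx1.le
        (ae_of_all _ fun t => by positivity) hint

end

/-- for q > 2, I_q(α) → +∞ as α → 0⁺. -/
theorem stmt_15 (q : ℝ) (hq : 2 < q) :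
    Tendsto (Iq q) (nhdsWithin 0 (Ioi (0 : ℝ))) atTop := by
  refine tendsto_atTop.2 fun C => ?_
  set M := 2 * exp |C|
  have hM : 2 ≤ M := le_mul_of_one_le_right two_pos.le (one_le_exp (abs_nonneg C))
  have hε : (0 : ℝ) < 1 / M ^ q := by positivity
  filter_upwards [self_mem_nhdsWithin, nhdsWithin_le_nhds (eventually_lt_nhds hε)]
    with α hα hαε
  calc C ≤ |C| := le_abs_self C
    _ = log (M / 2) := by rw [mul_div_cancel_left₀ _ two_ne_zero, log_exp]
    _ ≤ Iq q α := log_le_Iq hq hα hM ((lt_div_iff₀ (by positivity)).1 hαε)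
end
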